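/- Upper semicontinuity of angles under an upper curvature bound (Proposition 3.4, curvature ≤ 0 case). Let X be a proper metric space in which every pair of points is joined by a unit-speed shortest path and in which every point has a neighborhood that is a region of curvature ≤ 0. Let γₙ, γ : [0,T] → X and σₙ, σ : [0,S] → X (T, S > 0) be unit-speed geodesics with γₙ(0) = σₙ(0) for every n and γ(0) = σ(0), and suppose γₙ → γ uniformly on [0,T] and σₙ → σ uniformly on [0,S]. Then ∠⁺(γ, σ) ≥ limsup_{n→∞} ∠⁺(γₙ, σₙ). -/

import Mathlib

open Filter Topology Metric Set

noncomputable section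

/-- `γ` is a unit-speed geodesic (shortest path) on the interval `[0, T]`:
the distance between any two of its points equals the parameter difference. -/
def IsUnitSpeedGeodesicOn {X : Type*} [MetricSpace X] (γ : ℝ → X) (T : ℝ) : Prop :=
  ∀ t ∈ Set.Icc (0:ℝ) T, ∀ t' ∈ Set.Icc (0:ℝ) T, dist (γ t) (γ t') = |t - t'|

/-- The Euclidean comparison angle `∠⁰_p(x, y)` at the vertex `p`. -/
def compAngle {X : Type*} [MetricSpace X] (p x y : X) : ℝ :=
  Real.arccos ((dist p x ^ 2 + dist p y ^ 2 - dist x y ^ 2) /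
    (2 * dist p x * dist p y))

/-- The upper angle `∠⁺(γ, η)` between two geodesics with `γ 0 = η 0`:
the limsup of comparison angles `∠⁰_{γ 0}(γ t, η s)` as `(t, s) → (0⁺, 0⁺)`. -/
def upperAngle {X : Type*} [MetricSpace X] (γ η : ℝ → X) : ℝ :=
  Filter.limsup (fun ts : ℝ × ℝ => compAngle (γ 0) (γ ts.1) (η ts.2))
    ((𝓝[>] (0:ℝ)) ×ˢ (𝓝[>] (0:ℝ)))

/-- The lower angle `∠⁻(γ, η)`: liminf of comparison angles. -/
def lowerAngle {X : Type*} [MetricSpace X] (γ η : ℝ → X) : ℝ :=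
  Filter.liminf (fun ts : ℝ × ℝ => compAngle (γ 0) (γ ts.1) (η ts.2))
    ((𝓝[>] (0:ℝ)) ×ˢ (𝓝[>] (0:ℝ)))

/-- `U` is a region of curvature bounded by `0` in the comparison sense, where
`rel` is `≤` (curvature `≤ 0`) or `≥` (curvature `≥ 0`): any two points of `U`
are joined by a unit-speed shortest path with image in `U`, and for every
geodesic triangle contained in `U` and every Euclidean comparison triangle,
distances between pairs of points on the sides are related by `rel` to the
distances between the corresponding comparison points. -/
def IsCurvRegion {X : Type*} [MetricSpace X] (rel : ℝ → ℝ → Prop) (U : Set X) : Prop :=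
  (∀ x ∈ U, ∀ y ∈ U, ∃ γ : ℝ → X, IsUnitSpeedGeodesicOn γ (dist x y) ∧
    γ 0 = x ∧ γ (dist x y) = y ∧ ∀ t ∈ Set.Icc (0:ℝ) (dist x y), γ t ∈ U) ∧
  (∀ x ∈ U, ∀ y ∈ U, ∀ z ∈ U, ∀ p : Fin 3 → ℝ → X,
    (∀ i, IsUnitSpeedGeodesicOn (p i) (![dist x y, dist x z, dist y z] i) ∧
      p i 0 = (![(x, y), (x, z), (y, z)] i).1 ∧
      p i (![dist x y, dist x z, dist y z] i) = (![(x, y), (x, z), (y, z)] i).2 ∧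
      ∀ t ∈ Set.Icc (0:ℝ) (![dist x y, dist x z, dist y z] i), p i t ∈ U) →
    ∀ xb yb zb : EuclideanSpace ℝ (Fin 2),
      dist xb yb = dist x y → dist xb zb = dist x z → dist yb zb = dist y z →
      ∀ i j : Fin 3, ∀ a b : ℝ,
        a ∈ Set.Icc (0:ℝ) (![dist x y, dist x z, dist y z] i) →
        b ∈ Set.Icc (0:ℝ) (![dist x y, dist x z, dist y z] j) →
        rel (dist (p i a) (p j b))
          (dist
            (![fun c : ℝ => AffineMap.lineMap xb yb (c / dist x y),
               fun c : ℝ => AffineMap.lineMap xb zb (c / dist x z),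
               fun c : ℝ => AffineMap.lineMap yb zb (c / dist y z)] i a)
            (![fun c : ℝ => AffineMap.lineMap xb yb (c / dist x y),
               fun c : ℝ => AffineMap.lineMap xb zb (c / dist x z),
               fun c : ℝ => AffineMap.lineMap yb zb (c / dist y z)] j b)))

/-- A region of curvature `≤ 0`. -/
def IsCurvLeRegion {X : Type*} [MetricSpace X] (U : Set X) : Prop :=
  IsCurvRegion (· ≤ ·) U

/-- A region of curvature `≥ 0`. -/
def IsCurvGeRegion {X : Type*} [MetricSpace X] (U : Set X) : Prop :=
  IsCurvRegion (· ≥ ·) U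

end

/-!
In a region of curvature `≤ 0` the comparison angle `∠⁰_p(γ t, σ s)` between two geodesics from
`p` is monotone in `(t, s)`: comparing with the Euclidean triangle of the same side lengths, the
points at parameters `t' ≤ t`, `s' ≤ s` are at most as far apart as their comparison points, which
span the same angle. Hence `∠⁺(γ, σ) ≤ ∠⁰_p(γ t, σ s)` for every small `t, s`. Fix small `t, s`;
uniform convergence keeps `γₙ, σₙ` on `[0, t]`, `[0, s]` inside a curvature `≤ 0` neighbourhood of
`γ 0` for large `n`, so `∠⁺(γₙ, σₙ) ≤ ∠⁰(γₙ t, σₙ s) → ∠⁰(γ t, σ s)`. Letting `(t, s) → 0` gives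
the claim.
-/

section Euclidean

variable {V P : Type*} [NormedAddCommGroup V] [InnerProductSpace ℝ V] [MetricSpace P]
  [NormedAddTorsor V P]

theorem compAngle_eq_angle (p x y : P) : compAngle p x y = EuclideanGeometry.angle x p y := by
  rcases eq_or_ne x p with rfl | hx
  · simp [compAngle]
  rcases eq_or_ne y p with rfl | hy
  · simp [compAngle]
  have hxp : dist x p ≠ 0 := dist_ne_zero.2 hx
  have hyp : dist y p ≠ 0 := dist_ne_zero.2 hy
  have hcos : (dist p x ^ 2 + dist p y ^ 2 - dist x y ^ 2) / (2 * dist p x * dist p y)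
      = Real.cos (EuclideanGeometry.angle x p y) := by
    rw [dist_comm p x, dist_comm p y]
    field_simp
    linear_combination -EuclideanGeometry.law_cos x p y
  rw [compAngle, hcos, Real.arccos_cos (EuclideanGeometry.angle_nonneg _ _ _)
    (EuclideanGeometry.angle_le_pi _ _ _)]

theorem compAngle_lineMap_lineMap (p x y : P) {a b : ℝ} (ha : 0 < a) (hb : 0 < b) :
    compAngle p (AffineMap.lineMap p x a) (AffineMap.lineMap p y b) = compAngle p x y := by
  rw [compAngle_eq_angle, compAngle_eq_angle,
    EuclideanGeometry.angle_smul_left_of_pos _ ha (AffineMap.lineMap_vsub_left p x a).symm,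
    EuclideanGeometry.angle_smul_right_of_pos _ hb (AffineMap.lineMap_vsub_left p y b).symm]

end Euclidean

theorem exists_euclidean_comparison_triangle {X : Type*} [PseudoMetricSpace X] (x y z : X) :
    ∃ xb yb zb : EuclideanSpace ℝ (Fin 2),
      dist xb yb = dist x y ∧ dist xb zb = dist x z ∧ dist yb zb = dist y z := by
  set d₁ := dist x y
  set d₂ := dist x z
  set d₃ := dist y z
  have h₁ : d₃ ≤ d₁ + d₂ := by simpa [d₁, d₂, d₃, dist_comm x y] using dist_triangle y x z
  have h₂ : d₁ ≤ d₂ + d₃ := by simpa [d₁, d₂, d₃, dist_comm z y] using dist_triangle x z y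
  have h₃ : d₂ ≤ d₁ + d₃ := dist_triangle x y z
  have hd₁0 : 0 ≤ d₁ := dist_nonneg
  rcases hd₁0.eq_or_lt with hd₁ | hd₁
  · have hd₃ : d₃ = d₂ := by linarith
    refine ⟨0, 0, !₂[d₂, 0], by simp [← hd₁], ?_, ?_⟩ <;>
      simp [EuclideanSpace.dist_eq, Fin.sum_univ_two, hd₃, d₂]
  -- `yb` on the first axis, and `zb` placed by the law of cosines
  set u := (d₁ ^ 2 + d₂ ^ 2 - d₃ ^ 2) / (2 * d₁)
  have hu : 2 * d₁ * u = d₁ ^ 2 + d₂ ^ 2 - d₃ ^ 2 := by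
    simp only [u]; field_simp [hd₁.ne']
  have hv : 0 ≤ d₂ ^ 2 - u ^ 2 := by
    have heron : 4 * d₁ ^ 2 * (d₂ ^ 2 - u ^ 2) =
        (d₁ + d₂ - d₃) * (d₁ + d₂ + d₃) * (d₃ - d₁ + d₂) * (d₃ + d₁ - d₂) := by
      linear_combination (-(2 * d₁ * u) - (d₁ ^ 2 + d₂ ^ 2 - d₃ ^ 2)) * hu
    have hd₃ : 0 ≤ d₃ := dist_nonneg
    have : 0 ≤ 4 * d₁ ^ 2 * (d₂ ^ 2 - u ^ 2) := by
      rw [heron]; apply mul_nonneg (mul_nonneg (mul_nonneg _ _) _) _ <;> linarith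
    exact (mul_nonneg_iff_of_pos_left (by positivity)).1 this
  set v := √(d₂ ^ 2 - u ^ 2)
  have hv2 : v ^ 2 = d₂ ^ 2 - u ^ 2 := Real.sq_sqrt hv
  refine ⟨0, !₂[d₁, 0], !₂[u, v], ?_, ?_, ?_⟩ <;>
    simp only [EuclideanSpace.dist_eq, Fin.sum_univ_two, Real.dist_eq, sq_abs, WithLp.ofLp_zero,
      Pi.zero_apply, Matrix.cons_val_zero, Matrix.cons_val_one]
  · rw [Real.sqrt_eq_iff_eq_sq (by positivity) hd₁.le]; ring
  · rw [Real.sqrt_eq_iff_eq_sq (by positivity) dist_nonneg]; linear_combination hv2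
  · rw [Real.sqrt_eq_iff_eq_sq (by positivity) dist_nonneg]; linear_combination hv2 - hu

section CompAngle

variable {X : Type*} [MetricSpace X]

theorem compAngle_nonneg (p x y : X) : 0 ≤ compAngle p x y := Real.arccos_nonneg _

theorem compAngle_le_pi (p x y : X) : compAngle p x y ≤ Real.pi := Real.arccos_le_pi _

theorem compAngle_le_compAngle_of_dist_le {Y : Type*} [MetricSpace Y] {p x y : X} {p' x' y' : Y}
    (hx : dist p x = dist p' x') (hy : dist p y = dist p' y') (hxy : dist x y ≤ dist x' y') :
    compAngle p x y ≤ compAngle p' x' y' := by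
  refine Real.arccos_le_arccos ?_
  rw [hx, hy]
  gcongr

theorem Filter.Tendsto.compAngle {ι : Type*} {l : Filter ι} {p x y : ι → X} {p₀ x₀ y₀ : X}
    (hp : Tendsto p l (𝓝 p₀)) (hx : Tendsto x l (𝓝 x₀)) (hy : Tendsto y l (𝓝 y₀))
    (hpx : p₀ ≠ x₀) (hpy : p₀ ≠ y₀) :
    Tendsto (fun i => _root_.compAngle (p i) (x i) (y i)) l (𝓝 (_root_.compAngle p₀ x₀ y₀)) := by
  refine (Real.continuous_arccos.tendsto _).comp (Tendsto.div ?_ ?_ ?_)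
  · exact (((hp.dist hx).pow 2).add ((hp.dist hy).pow 2)).sub ((hx.dist hy).pow 2)
  · exact (tendsto_const_nhds.mul (hp.dist hx)).mul (hp.dist hy)
  · have := dist_pos.2 hpx
    have := dist_pos.2 hpy
    positivity

theorem le_upperAngle_of_eventually {γ η : ℝ → X} {c : ℝ}
    (h : ∀ᶠ ts in 𝓝[>] (0 : ℝ) ×ˢ 𝓝[>] (0 : ℝ), c ≤ compAngle (γ 0) (γ ts.1) (η ts.2)) :
    c ≤ upperAngle γ η :=
  le_limsup_of_frequently_le h.frequently
    (isBoundedUnder_of ⟨Real.pi, fun _ => compAngle_le_pi _ _ _⟩)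

theorem upperAngle_le_of_eventually {γ η : ℝ → X} {c : ℝ}
    (h : ∀ᶠ ts in 𝓝[>] (0 : ℝ) ×ˢ 𝓝[>] (0 : ℝ), compAngle (γ 0) (γ ts.1) (η ts.2) ≤ c) :
    upperAngle γ η ≤ c :=
  limsup_le_of_le (isCoboundedUnder_le_of_le _ fun _ => compAngle_nonneg _ _ _) h

theorem upperAngle_nonneg (γ η : ℝ → X) : 0 ≤ upperAngle γ η :=
  le_upperAngle_of_eventually (Eventually.of_forall fun _ => compAngle_nonneg _ _ _)

end CompAngle

namespace IsUnitSpeedGeodesicOn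

variable {X : Type*} [MetricSpace X] {γ : ℝ → X} {T : ℝ}

theorem mono (hγ : IsUnitSpeedGeodesicOn γ T) {t : ℝ} (ht : t ≤ T) :
    IsUnitSpeedGeodesicOn γ t :=
  fun u hu u' hu' => hγ u ⟨hu.1, hu.2.trans ht⟩ u' ⟨hu'.1, hu'.2.trans ht⟩

theorem dist_zero (hγ : IsUnitSpeedGeodesicOn γ T) {t : ℝ} (ht : t ∈ Icc 0 T) :
    dist (γ 0) (γ t) = t := by
  rw [hγ 0 ⟨le_rfl, ht.1.trans ht.2⟩ t ht, zero_sub, abs_neg, abs_of_nonneg ht.1]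

theorem mapsTo_closedBall (hγ : IsUnitSpeedGeodesicOn γ T) :
    MapsTo γ (Icc 0 T) (closedBall (γ 0) T) :=
  fun _ ht => by rw [mem_closedBall, dist_comm, hγ.dist_zero ht]; exact ht.2

end IsUnitSpeedGeodesicOn

theorem TendstoUniformlyOn.eventually_mapsTo_ball {ι α X : Type*} [PseudoMetricSpace X]
    {l : Filter ι} {F : ι → α → X} {f : α → X} {s : Set α} (h : TendstoUniformlyOn F f l s)
    {p : X} {ρ r : ℝ} (hρr : ρ < r) (hf : MapsTo f s (closedBall p ρ)) :
    ∀ᶠ n in l, MapsTo (F n) s (ball p r) := by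
  filter_upwards [Metric.tendstoUniformlyOn_iff.1 h (r - ρ) (sub_pos.2 hρr)] with n hn u hu
  calc dist (F n u) p ≤ dist (f u) (F n u) + dist (f u) p := dist_triangle_left _ _ _
    _ < (r - ρ) + ρ := add_lt_add_of_lt_of_le (hn u hu) (hf hu)
    _ = r := sub_add_cancel r ρ

namespace IsCurvLeRegion

variable {X : Type*} [MetricSpace X] {U : Set X}

theorem dist_le_dist_lineMap (hU : IsCurvLeRegion U) {α β : ℝ → X} {t s : ℝ}
    (hα : IsUnitSpeedGeodesicOn α t) (hβ : IsUnitSpeedGeodesicOn β s) (h0 : α 0 = β 0)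
    (hαU : MapsTo α (Icc 0 t) U) (hβU : MapsTo β (Icc 0 s) U)
    {xb yb zb : EuclideanSpace ℝ (Fin 2)} (hxy : dist xb yb = dist (α 0) (α t))
    (hxz : dist xb zb = dist (α 0) (β s)) (hyz : dist yb zb = dist (α t) (β s))
    {t' s' : ℝ} (ht' : t' ∈ Icc 0 t) (hs' : s' ∈ Icc 0 s) :
    dist (α t') (β s') ≤
      dist (AffineMap.lineMap xb yb (t' / t)) (AffineMap.lineMap xb zb (s' / s)) := by
  have ht : t ∈ Icc 0 t := ⟨ht'.1.trans ht'.2, le_rfl⟩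
  have hs : s ∈ Icc 0 s := ⟨hs'.1.trans hs'.2, le_rfl⟩
  have hdt := hα.dist_zero ht
  have hds : dist (α 0) (β s) = s := h0 ▸ hβ.dist_zero hs
  obtain ⟨w, hw, hw0, hw1, hwU⟩ := hU.1 _ (hαU ht) _ (hβU hs)
  have := hU.2 (α 0) (hαU (left_mem_Icc.2 ht.1)) (α t) (hαU ht) (β s) (hβU hs) ![α, β, w]
  rw [hdt, hds] at this
  refine this ?_ xb yb zb (hxy.trans hdt) (hxz.trans hds) hyz 0 1 t' s' ht' hs'
  intro i
  fin_cases i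
  · exact ⟨hα, rfl, rfl, hαU⟩
  · exact ⟨hβ, h0.symm, rfl, hβU⟩
  · exact ⟨hw, hw0, hw1, hwU⟩

theorem compAngle_mono (hU : IsCurvLeRegion U) {α β : ℝ → X} {t s : ℝ}
    (hα : IsUnitSpeedGeodesicOn α t) (hβ : IsUnitSpeedGeodesicOn β s) (h0 : α 0 = β 0)
    (hαU : MapsTo α (Icc 0 t) U) (hβU : MapsTo β (Icc 0 s) U)
    {t' s' : ℝ} (ht' : t' ∈ Ioc 0 t) (hs' : s' ∈ Ioc 0 s) :
    compAngle (α 0) (α t') (β s') ≤ compAngle (α 0) (α t) (β s) := by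
  have ht : 0 < t := ht'.1.trans_le ht'.2
  have hs : 0 < s := hs'.1.trans_le hs'.2
  obtain ⟨xb, yb, zb, hxy, hxz, hyz⟩ := exists_euclidean_comparison_triangle (α 0) (α t) (β s)
  have hdt := hα.dist_zero ⟨ht.le, le_rfl⟩
  have hds : dist (α 0) (β s) = s := h0 ▸ hβ.dist_zero ⟨hs.le, le_rfl⟩
  have hdt' : dist xb (AffineMap.lineMap xb yb (t' / t)) = dist (α 0) (α t') := by
    rw [dist_left_lineMap, hxy, hdt, hα.dist_zero (Ioc_subset_Icc_self ht'), Real.norm_eq_abs,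
      abs_of_pos (div_pos ht'.1 ht), div_mul_cancel₀ _ ht.ne']
  have hds' : dist xb (AffineMap.lineMap xb zb (s' / s)) = dist (α 0) (β s') := by
    rw [dist_left_lineMap, hxz, hds, h0, hβ.dist_zero (Ioc_subset_Icc_self hs'), Real.norm_eq_abs,
      abs_of_pos (div_pos hs'.1 hs), div_mul_cancel₀ _ hs.ne']
  calc compAngle (α 0) (α t') (β s')
      ≤ compAngle xb (AffineMap.lineMap xb yb (t' / t)) (AffineMap.lineMap xb zb (s' / s)) :=
        compAngle_le_compAngle_of_dist_le hdt'.symm hds'.symm <|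
          hU.dist_le_dist_lineMap hα hβ h0 hαU hβU hxy hxz hyz (Ioc_subset_Icc_self ht')
            (Ioc_subset_Icc_self hs')
    _ = compAngle xb yb zb := compAngle_lineMap_lineMap _ _ _ (div_pos ht'.1 ht) (div_pos hs'.1 hs)
    _ ≤ compAngle (α 0) (α t) (β s) := compAngle_le_compAngle_of_dist_le hxy hxz hyz.le

theorem upperAngle_le_compAngle (hU : IsCurvLeRegion U) {α β : ℝ → X} {t s : ℝ}
    (ht : 0 < t) (hs : 0 < s)
    (hα : IsUnitSpeedGeodesicOn α t) (hβ : IsUnitSpeedGeodesicOn β s) (h0 : α 0 = β 0)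
    (hαU : MapsTo α (Icc 0 t) U) (hβU : MapsTo β (Icc 0 s) U) :
    upperAngle α β ≤ compAngle (α 0) (α t) (β s) :=
  upperAngle_le_of_eventually <| mem_of_superset
    (prod_mem_prod (Ioc_mem_nhdsGT ht) (Ioc_mem_nhdsGT hs))
    fun _ hts => hU.compAngle_mono hα hβ h0 hαU hβU hts.1 hts.2

theorem limsup_upperAngle_le_compAngle {ι : Type*} (hU : IsCurvLeRegion U)
    {l : Filter ι} [l.NeBot]
    {γn σn : ι → ℝ → X} {γ σ : ℝ → X} {t s r : ℝ} (ht : 0 < t) (hs : 0 < s)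
    (htr : t < r) (hsr : s < r) (hr : ball (γ 0) r ⊆ U)
    (hγn : ∀ n, IsUnitSpeedGeodesicOn (γn n) t) (hσn : ∀ n, IsUnitSpeedGeodesicOn (σn n) s)
    (hγ : IsUnitSpeedGeodesicOn γ t) (hσ : IsUnitSpeedGeodesicOn σ s)
    (h0n : ∀ n, γn n 0 = σn n 0) (h0 : γ 0 = σ 0)
    (hγconv : TendstoUniformlyOn γn γ l (Icc 0 t))
    (hσconv : TendstoUniformlyOn σn σ l (Icc 0 s)) :
    limsup (fun n => upperAngle (γn n) (σn n)) l ≤ compAngle (γ 0) (γ t) (σ s) := by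
  have hγU := hγconv.eventually_mapsTo_ball htr hγ.mapsTo_closedBall
  have hσU := hσconv.eventually_mapsTo_ball hsr (h0 ▸ hσ.mapsTo_closedBall)
  have hbound : ∀ᶠ n in l,
      upperAngle (γn n) (σn n) ≤ compAngle (γn n 0) (γn n t) (σn n s) := by
    filter_upwards [hγU, hσU] with n hγnU hσnU
    exact hU.upperAngle_le_compAngle ht hs (hγn n) (hσn n) (h0n n) (hγnU.mono_right hr)
      (hσnU.mono_right hr)
  have hlim : Tendsto (fun n => compAngle (γn n 0) (γn n t) (σn n s)) l
      (𝓝 (compAngle (γ 0) (γ t) (σ s))) := by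
    refine (hγconv.tendsto_at ⟨le_rfl, ht.le⟩).compAngle (hγconv.tendsto_at ⟨ht.le, le_rfl⟩)
      (hσconv.tendsto_at ⟨hs.le, le_rfl⟩) ?_ ?_
    · rw [← dist_pos, hγ.dist_zero ⟨ht.le, le_rfl⟩]; exact ht
    · rw [← dist_pos, h0, hσ.dist_zero ⟨hs.le, le_rfl⟩]; exact hs
  calc limsup (fun n => upperAngle (γn n) (σn n)) l
      ≤ limsup (fun n => compAngle (γn n 0) (γn n t) (σn n s)) l :=
        limsup_le_limsup hbound (isCoboundedUnder_le_of_le _ fun _ => upperAngle_nonneg _ _)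
          hlim.isBoundedUnder_le
    _ = compAngle (γ 0) (γ t) (σ s) := hlim.limsup_eq

end IsCurvLeRegion

theorem angle_upper_semicontinuous_of_curvLe_general {X : Type*} [MetricSpace X]
    (hcurv : ∀ p : X, ∃ U ∈ 𝓝 p, IsCurvLeRegion U)
    {T S : ℝ} (hT : 0 < T) (hS : 0 < S)
    (γn : ℕ → ℝ → X) (γ : ℝ → X) (σn : ℕ → ℝ → X) (σ : ℝ → X)
    (hγn : ∀ n, IsUnitSpeedGeodesicOn (γn n) T)
    (hγ : IsUnitSpeedGeodesicOn γ T)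
    (hσn : ∀ n, IsUnitSpeedGeodesicOn (σn n) S)
    (hσ : IsUnitSpeedGeodesicOn σ S)
    (h0n : ∀ n, γn n 0 = σn n 0) (h0 : γ 0 = σ 0)
    (hγconv : TendstoUniformlyOn (fun n u => γn n u) γ atTop (Set.Icc 0 T))
    (hσconv : TendstoUniformlyOn (fun n u => σn n u) σ atTop (Set.Icc 0 S)) :
    Filter.limsup (fun n => upperAngle (γn n) (σn n)) atTop
      ≤ upperAngle γ σ := by
  obtain ⟨U, hUp, hU⟩ := hcurv (γ 0)
  obtain ⟨r, hr, hrU⟩ := Metric.mem_nhds_iff.1 hUp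
  refine le_upperAngle_of_eventually <| mem_of_superset (prod_mem_prod
    (Ioc_mem_nhdsGT (lt_min hT (half_pos hr))) (Ioc_mem_nhdsGT (lt_min hS (half_pos hr)))) ?_
  rintro ⟨t, s⟩ ⟨⟨ht, htT⟩, ⟨hs, hsS⟩⟩
  rw [le_min_iff] at htT hsS
  exact hU.limsup_upperAngle_le_compAngle ht hs (by linarith) (by linarith) hrU
    (fun n => (hγn n).mono htT.1) (fun n => (hσn n).mono hsS.1) (hγ.mono htT.1) (hσ.mono hsS.1)
    h0n h0 (hγconv.mono (Icc_subset_Icc_right htT.1)) (hσconv.mono (Icc_subset_Icc_right hsS.1))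

/-- Proposition 3.4, curvature `≤ 0` case: upper semicontinuity of angles. -/
theorem angle_upper_semicontinuous_of_curvLe {X : Type*} [MetricSpace X]
    [ProperSpace X]
    (hgeo : ∀ x y : X, ∃ γ : ℝ → X, IsUnitSpeedGeodesicOn γ (dist x y) ∧
      γ 0 = x ∧ γ (dist x y) = y)
    (hcurv : ∀ p : X, ∃ U ∈ 𝓝 p, IsCurvLeRegion U)
    {T S : ℝ} (hT : 0 < T) (hS : 0 < S)
    (γn : ℕ → ℝ → X) (γ : ℝ → X) (σn : ℕ → ℝ → X) (σ : ℝ → X)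
    (hγn : ∀ n, IsUnitSpeedGeodesicOn (γn n) T)
    (hγ : IsUnitSpeedGeodesicOn γ T)
    (hσn : ∀ n, IsUnitSpeedGeodesicOn (σn n) S)
    (hσ : IsUnitSpeedGeodesicOn σ S)
    (h0n : ∀ n, γn n 0 = σn n 0) (h0 : γ 0 = σ 0)
    (hγconv : TendstoUniformlyOn (fun n u => γn n u) γ atTop (Set.Icc 0 T))
    (hσconv : TendstoUniformlyOn (fun n u => σn n u) σ atTop (Set.Icc 0 S)) :
    Filter.limsup (fun n => upperAngle (γn n) (σn n)) atTop
      ≤ upperAngle γ σ :=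
  angle_upper_semicontinuous_of_curvLe_general hcurv hT hS γn γ σn σ hγn hγ hσn hσ h0n h0 hγconv
    hσconv
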